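/- (Proposition 5.1.) Under the standing setting, fix k ∈ ℕ and suppose: ũ is a piecewise constant control with value ũ_j ∈ U on each I_j; ỹ : [0, ∞) → ℝ^d satisfies ỹ(0) = x and ỹ'(t) = Aỹ(t) + Bũ(t) for a.e. t > 0; φ̃ : [0, ∞) → ℝ^d satisfies −φ̃'(t) = Aᵀφ̃(t) + e^{−λt}(ỹ(t) − y_d) for t > 0 and φ̃(t) → 0 as t → ∞; and ũ_k minimizes u ↦ ∫_{I_k} ⟨φ̃(t), Bu⟩ dt + γ b_k (Σ_{i=1}^m |u_i|^p)^{q/p} over u ∈ U. Let ω ∈ ℝ^m with ũ_k + ω ∈ U, let u^ω be the control equal to ũ_k + ω on I_k and equal to ũ elsewhere, and let y^ω satisfy y^ω(0) = x and (y^ω)'(t) = Ay^ω(t) + Bu^ω(t) for a.e. t > 0. Assume the functions t ↦ e^{−λt}‖ỹ(t) − y_d‖², t ↦ e^{−λt}‖y^ω(t) − y_d‖² and t ↦ e^{−λt}‖y^ω(t) − ỹ(t)‖² are integrable on (0, ∞), and ⟨φ̃(t), y^ω(t) − ỹ(t)⟩ → 0 as t → ∞. Then J^Δ(x, u^ω)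 − J^Δ(x, ũ) ≥ ∫₀^∞ (1/2) e^{−λt} ‖y^ω(t) − ỹ(t)‖² dt ≥ 0; in particular J^Δ(x, u^ω) ≥ J^Δ(x, ũ). -/

import Mathlib

/-- The Euclidean inner product on `ℝ^d` (as `Fin d → ℝ`). -/
def eInner {d : ℕ} (x y : Fin d → ℝ) : ℝ := ∑ i, x i * y i

/-- Discount weights `b_k = (e^{-λ t_k} - e^{-λ t_{k+1}})/λ = ∫_{I_k} e^{-λ t} dt`. -/
noncomputable def bcoef (lam : ℝ) (tg : ℕ → ℝ) (k : ℕ) : ℝ :=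
  (Real.exp (-lam * tg k) - Real.exp (-lam * tg (k + 1))) / lam

/-- Cost `J^Δ(x,u)` of a piecewise constant control `v` with trajectory `y`. -/
noncomputable def Jcost (d m : ℕ) (lam γ p q : ℝ) (yd : Fin d → ℝ) (tg : ℕ → ℝ)
    (y : ℝ → Fin d → ℝ) (v : ℕ → Fin m → ℝ) : ℝ :=
  (∫ t in Set.Ioi (0 : ℝ), (1 / 2) * Real.exp (-lam * t) * ∑ i, (y t i - yd i) ^ 2)
    + γ * ∑' k, bcoef lam tg k * (∑ i, |v k i| ^ p) ^ (q / p)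

/-- `y` is the trajectory of `ẏ = Ay + Bu`, `y(0) = x`, for the piecewise constant
control taking value `v k` on the grid interval `I_k = [t_k, t_{k+1})`. -/
def IsTraj (d m : ℕ) (A : Matrix (Fin d) (Fin d) ℝ) (B : Matrix (Fin d) (Fin m) ℝ)
    (x : Fin d → ℝ) (tg : ℕ → ℝ) (y : ℝ → Fin d → ℝ) (v : ℕ → Fin m → ℝ) : Prop :=
  y 0 = x ∧ ContinuousOn y (Set.Ici 0) ∧
    ∀ k, ∀ t ∈ Set.Ioo (tg k) (tg (k + 1)),
      HasDerivAt y (A.mulVec (y t) + B.mulVec (v k)) t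

/-!
Put `z = y^ω - ỹ`. On every grid cell, `d/dt ⟨φ̃, z⟩ = 1_{I_k} ⟨φ̃, Bω⟩ - e^{-λt} ⟨ỹ - y_d, z⟩`,
and `⟨φ̃, z⟩` vanishes at `t = 0` (as `z(0) = 0` and `φ̃` stays bounded near `0` by Grönwall's
inequality) and at infinity. Integrating over `(0, ∞)` identifies the cross term of
`‖y^ω - y_d‖² = ‖ỹ - y_d‖² + ‖z‖² + 2⟨ỹ - y_d, z⟩` with `∫_{I_k} ⟨φ̃, Bω⟩`. Hence
`J^Δ(x, u^ω) - J^Δ(x, ũ)` is `∫ ½ e^{-λt} ‖z‖²` plus the increase of the local Hamiltonian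
from `ũ_k` to `ũ_k + ω`, which is nonnegative because `ũ_k` minimizes it.
-/

open MeasureTheory Filter Set Topology Matrix

theorem eInner_eq_dotProduct {d : ℕ} (x y : Fin d → ℝ) : eInner x y = x ⬝ᵥ y := rfl

theorem HasDerivAt.dotProduct {ι : Type*} [Fintype ι] {f g : ℝ → ι → ℝ} {f' g' : ι → ℝ}
    {t : ℝ} (hf : HasDerivAt f f' t) (hg : HasDerivAt g g' t) :
    HasDerivAt (fun s => f s ⬝ᵥ g s) (f' ⬝ᵥ g t + f t ⬝ᵥ g') t := by
  have h : HasDerivAt (fun s => f s ⬝ᵥ g s) (∑ i, (f' i * g t i + f t i * g' i)) t :=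
    HasDerivAt.fun_sum fun i _ => (hasDerivAt_pi.mp hf i).fun_mul (hasDerivAt_pi.mp hg i)
  exact h.congr_deriv (Finset.sum_add_distrib)

theorem hasDerivAt_dotProduct_sub_of_adjoint {ι : Type*} [Fintype ι] (A : Matrix ι ι ℝ)
    {φ y₁ y₂ : ℝ → ι → ℝ} {c b₁ b₂ : ι → ℝ} {t : ℝ}
    (hφ : HasDerivAt φ (-(Aᵀ *ᵥ φ t) - c) t)
    (h₁ : HasDerivAt y₁ (A *ᵥ y₁ t + b₁) t) (h₂ : HasDerivAt y₂ (A *ᵥ y₂ t + b₂) t) :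
    HasDerivAt (fun s => φ s ⬝ᵥ (y₂ s - y₁ s))
      (φ t ⬝ᵥ (b₂ - b₁) - c ⬝ᵥ (y₂ t - y₁ t)) t := by
  convert hφ.dotProduct (h₂.fun_sub h₁) using 1
  have hdrift : A *ᵥ y₂ t + b₂ - (A *ᵥ y₁ t + b₁) = A *ᵥ (y₂ t - y₁ t) + (b₂ - b₁) := by
    rw [mulVec_sub]; abel
  have hadj : (Aᵀ *ᵥ φ t) ⬝ᵥ (y₂ t - y₁ t) = φ t ⬝ᵥ (A *ᵥ (y₂ t - y₁ t)) := by
    rw [mulVec_transpose, dotProduct_mulVec]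
  rw [hdrift, sub_dotProduct, neg_dotProduct, hadj, dotProduct_add]
  ring

theorem integral_Ioi_of_hasDerivAt_off_countable_of_tendsto {E : Type*} [NormedAddCommGroup E]
    [NormedSpace ℝ E] [CompleteSpace E] {f f' : ℝ → E} {a : ℝ} {m : E} {s : Set ℝ}
    (hs : s.Countable) (hcont : ContinuousOn f (Ici a))
    (hderiv : ∀ x ∈ Ioi a \ s, HasDerivAt f (f' x) x) (f'int : IntegrableOn f' (Ioi a))
    (hf : Tendsto f atTop (𝓝 m)) : ∫ x in Ioi a, f' x = m - f a := by
  refine tendsto_nhds_unique (intervalIntegral_tendsto_integral_Ioi a f'int tendsto_id) ?_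
  refine Tendsto.congr' ?_ (hf.sub_const _)
  filter_upwards [Ioi_mem_atTop a] with x hx
  exact (integral_eq_of_hasDerivAt_off_countable_of_le f f' hx.out.le hs
    (hcont.mono Icc_subset_Ici_self) (fun y hy => hderiv y ⟨hy.1.1, hy.2⟩)
    ((intervalIntegrable_iff_integrableOn_Ioc_of_le hx.out.le).mpr
      (f'int.mono_set Ioc_subset_Ioi_self))).symm

theorem Monotone.exists_mem_Ioo_of_notMem_range {β : Type*} [LinearOrder β] {f : ℕ → β}
    (hf : Monotone f) (hbdd : ¬BddAbove (range f)) {t : β} (ht : f 0 ≤ t) (hnot : t ∉ range f) :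
    ∃ j, t ∈ Ioo (f j) (f (j + 1)) := by
  have hcover := iUnion_Ico_map_succ_eq_Ici (fun j => hf (Nat.zero_le j)) hbdd
  obtain ⟨j, hj⟩ := mem_iUnion.mp (hcover.symm ▸ ht : t ∈ ⋃ j, Ico (f j) (f (Order.succ j)))
  exact ⟨j, lt_of_le_of_ne hj.1 fun h => hnot ⟨j, h⟩, hj.2⟩

theorem exists_norm_le_of_norm_deriv_le {E : Type*} [NormedAddCommGroup E] [NormedSpace ℝ E]
    {f f' : ℝ → E} {a b K C : ℝ} (hf : ∀ t ∈ Ioc a b, HasDerivAt f (f' t) t)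
    (bound : ∀ t ∈ Ioc a b, ‖f' t‖ ≤ K * ‖f t‖ + C) : ∃ M, ∀ t ∈ Ioc a b, ‖f t‖ ≤ M := by
  refine ⟨gronwallBound ‖f b‖ (max K 0) (max C 0) (b - a), fun t ht => ?_⟩
  -- Grönwall applied to the time reversal `s ↦ f (b - s)` on `[0, b - t]`
  have hmem : ∀ s ∈ Icc 0 (b - t), b - s ∈ Ioc a b := fun s hs =>
    ⟨by linarith [hs.2, ht.1], by linarith [hs.1]⟩
  have hderiv : ∀ s ∈ Icc 0 (b - t), HasDerivAt (fun s => f (b - s)) (-f' (b - s)) s :=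
    fun s hs => by
      simpa [Function.comp_def] using (hf _ (hmem s hs)).scomp s ((hasDerivAt_id s).const_sub b)
  have hgron := norm_le_gronwallBound_of_norm_deriv_right_le
    (δ := ‖f b‖) (K := max K 0) (ε := max C 0)
    (fun s hs => (hderiv s hs).continuousAt.continuousWithinAt)
    (fun s hs => (hderiv s (Ico_subset_Icc_self hs)).hasDerivWithinAt)
    (by simp)
    (fun s hs => by
      have h := bound _ (hmem s (Ico_subset_Icc_self hs))
      rw [norm_neg]
      nlinarith [le_max_left K 0, le_max_left C 0, norm_nonneg (f (b - s))])
    (b - t) ⟨by linarith [ht.2], le_rfl⟩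
  simp only [sub_sub_cancel, sub_zero] at hgron
  exact hgron.trans (gronwallBound_mono (norm_nonneg _) (le_max_right C 0) (le_max_right K 0)
    (by linarith [ht.1]))

theorem abs_dotProduct_le_norm_mul_sum_abs {ι : Type*} [Fintype ι] (x y : ι → ℝ) :
    |x ⬝ᵥ y| ≤ ‖x‖ * ∑ i, |y i| := by
  rw [Finset.mul_sum]
  refine (Finset.abs_sum_le_sum_abs _ _).trans (Finset.sum_le_sum fun i _ => ?_)
  rw [abs_mul]
  exact mul_le_mul_of_nonneg_right (norm_le_pi_norm x i) (abs_nonneg _)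

theorem two_mul_abs_dotProduct_le {ι : Type*} [Fintype ι] (x y : ι → ℝ) :
    2 * |x ⬝ᵥ y| ≤ ∑ i, x i ^ 2 + ∑ i, y i ^ 2 := by
  rw [← Finset.sum_add_distrib]
  refine (mul_le_mul_of_nonneg_left (Finset.abs_sum_le_sum_abs _ _) zero_le_two).trans ?_
  rw [Finset.mul_sum]
  refine Finset.sum_le_sum fun i _ => ?_
  rw [abs_mul, ← sq_abs (x i), ← sq_abs (y i), ← mul_assoc]
  exact two_mul_le_add_sq _ _

theorem exists_norm_le_of_hasDerivAt_adjoint {ι : Type*} [Fintype ι] (A : Matrix ι ι ℝ)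
    {φ c : ℝ → ι → ℝ} {a b C : ℝ} (hc : ∀ t ∈ Ioc a b, ‖c t‖ ≤ C)
    (hφ : ∀ t ∈ Ioc a b, HasDerivAt φ (-(Aᵀ *ᵥ φ t) - c t) t) :
    ∃ M, ∀ t ∈ Ioc a b, ‖φ t‖ ≤ M := by
  open scoped Matrix.Norms.Operator in
  refine exists_norm_le_of_norm_deriv_le (K := ‖Aᵀ‖) (C := C) hφ fun t ht => ?_
  calc ‖-(Aᵀ *ᵥ φ t) - c t‖ ≤ ‖Aᵀ *ᵥ φ t‖ + ‖c t‖ := by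
        rw [← norm_neg (Aᵀ *ᵥ φ t)]; exact norm_sub_le _ _
    _ ≤ ‖Aᵀ‖ * ‖φ t‖ + C := add_le_add (linfty_opNorm_mulVec _ _) (hc t ht)

theorem bcoef_nonneg {lam : ℝ} (hlam : 0 ≤ lam) {tg : ℕ → ℝ} (htg : Monotone tg) (j : ℕ) :
    0 ≤ bcoef lam tg j := by
  refine div_nonneg (sub_nonneg.mpr (Real.exp_le_exp.mpr ?_)) hlam
  nlinarith [htg j.le_succ]

theorem summable_bcoef {lam : ℝ} (hlam : 0 < lam) {tg : ℕ → ℝ} (htg : Monotone tg) :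
    Summable (bcoef lam tg) := by
  refine summable_of_sum_range_le (f := bcoef lam tg) (c := Real.exp (-lam * tg 0) / lam)
    (bcoef_nonneg hlam.le htg) fun n => ?_
  have htelescope : ∑ j ∈ Finset.range n, bcoef lam tg j
      = (Real.exp (-lam * tg 0) - Real.exp (-lam * tg n)) / lam := by
    unfold bcoef
    rw [← Finset.sum_div, Finset.sum_range_sub' (fun j => Real.exp (-lam * tg j))]
  rw [htelescope]
  gcongr
  linarith [Real.exp_pos (-lam * tg n)]

theorem tsum_mul_update_sub_tsum {α : Type*} {b : ℕ → ℝ} {N : α → ℝ} {u : ℕ → α}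
    (hsum : Summable fun j => b j * N (u j)) (k : ℕ) (w : α) :
    ∑' j, b j * N (Function.update u k w j) - ∑' j, b j * N (u j) = b k * N w - b k * N (u k) := by
  have hupdate : (fun j => b j * N (Function.update u k w j))
      = Function.update (fun j => b j * N (u j)) k (b k * N w) :=
    funext (Function.apply_update (fun j a => b j * N a) u k w)
  rw [hupdate, (hsum.hasSum.update k _).tsum_eq]
  ring

theorem tsum_bcoef_mul_update_sub_tsum {α : Type*} {lam : ℝ} (hlam : 0 < lam) {tg : ℕ → ℝ}
    (htg : Monotone tg) {N : α → ℝ} (hN0 : ∀ a, 0 ≤ N a) {u : ℕ → α} {C : ℝ}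
    (huC : ∀ j, N (u j) ≤ C) (k : ℕ) (w : α) :
    ∑' j, bcoef lam tg j * N (Function.update u k w j) - ∑' j, bcoef lam tg j * N (u j)
      = bcoef lam tg k * N w - bcoef lam tg k * N (u k) :=
  tsum_mul_update_sub_tsum (Summable.of_nonneg_of_le
    (fun j => mul_nonneg (bcoef_nonneg hlam.le htg j) (hN0 _))
    (fun j => mul_le_mul_of_nonneg_left (huC j) (bcoef_nonneg hlam.le htg j))
    ((summable_bcoef hlam htg).mul_right C)) k w

theorem IsCompact.exists_rpow_sum_abs_rpow_le {ι : Type*} [Fintype ι] {U : Set (ι → ℝ)}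
    (hU : IsCompact U) {p r : ℝ} (hp : 0 ≤ p) (hr : 0 ≤ r) :
    ∃ C, ∀ u ∈ U, (∑ i, |u i| ^ p) ^ r ≤ C := by
  have hcont : Continuous fun u : ι → ℝ => (∑ i, |u i| ^ p) ^ r :=
    (Real.continuous_rpow_const hr).comp (continuous_finsetSum _ fun i _ =>
      (Real.continuous_rpow_const hp).comp (continuous_abs.comp (continuous_apply i)))
  obtain ⟨C, hC⟩ := hU.bddAbove_image hcont.continuousOn
  exact ⟨C, fun u hu => hC (mem_image_of_mem _ hu)⟩

section WeightedIntegrals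

variable {α ι : Type*} [MeasurableSpace α] [Fintype ι] {μ : Measure α} {w : α → ℝ}

theorem Integrable.mul_dotProduct_of_sum_sq {a b : α → ι → ℝ} (hw : ∀ t, 0 ≤ w t)
    (ha : Integrable (fun t => w t * ∑ i, a t i ^ 2) μ)
    (hb : Integrable (fun t => w t * ∑ i, b t i ^ 2) μ)
    (hm : AEStronglyMeasurable (fun t => w t * (a t ⬝ᵥ b t)) μ) :
    Integrable (fun t => w t * (a t ⬝ᵥ b t)) μ := by
  refine ((ha.add hb).div_const 2).mono' hm (ae_of_all _ fun t => ?_)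
  have h := mul_le_mul_of_nonneg_left (two_mul_abs_dotProduct_le (a t) (b t)) (hw t)
  rw [Real.norm_eq_abs, abs_mul, abs_of_nonneg (hw t)]
  simp only [Pi.add_apply]
  linarith

theorem integral_half_mul_sum_sq_sub_eq {y₁ y₂ : α → ι → ℝ} {c : ι → ℝ}
    (h₁ : Integrable (fun t => w t * ∑ i, (y₁ t i - c i) ^ 2) μ)
    (h₂ : Integrable (fun t => w t * ∑ i, (y₂ t i - y₁ t i) ^ 2) μ)
    (hcross : Integrable (fun t => w t * ((y₁ t - c) ⬝ᵥ (y₂ t - y₁ t))) μ) :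
    ∫ t, 1 / 2 * w t * ∑ i, (y₂ t i - c i) ^ 2 ∂μ
      = ∫ t, 1 / 2 * w t * ∑ i, (y₁ t i - c i) ^ 2 ∂μ
        + ∫ t, 1 / 2 * w t * ∑ i, (y₂ t i - y₁ t i) ^ 2 ∂μ
        + ∫ t, w t * ((y₁ t - c) ⬝ᵥ (y₂ t - y₁ t)) ∂μ := by
  have hpoint : ∀ t, 1 / 2 * w t * ∑ i, (y₂ t i - c i) ^ 2
      = 1 / 2 * (w t * ∑ i, (y₁ t i - c i) ^ 2) + 1 / 2 * (w t * ∑ i, (y₂ t i - y₁ t i) ^ 2)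
        + w t * ((y₁ t - c) ⬝ᵥ (y₂ t - y₁ t)) := fun t => by
    have hsq : ∑ i, (y₂ t i - c i) ^ 2 = ∑ i, ((y₁ t i - c i) ^ 2 + (y₂ t i - y₁ t i) ^ 2
        + 2 * ((y₁ t i - c i) * (y₂ t i - y₁ t i))) :=
      Finset.sum_congr rfl fun i _ => by ring
    simp only [hsq, Finset.sum_add_distrib, ← Finset.mul_sum, dotProduct, Pi.sub_apply]
    ring
  simp_rw [hpoint]
  rw [integral_add ((h₁.const_mul _).fun_add (h₂.const_mul _)) hcross,
    integral_add (h₁.const_mul _) (h₂.const_mul _)]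
  simp only [integral_const_mul, mul_assoc]

end WeightedIntegrals

theorem isBoundedUnder_dotProduct_tendsto_zero {α ι : Type*} [Fintype ι] {l : Filter α}
    {f g : α → ι → ℝ} (hf : IsBoundedUnder (· ≤ ·) l (norm ∘ f)) (hg : Tendsto g l (𝓝 0)) :
    Tendsto (fun t => f t ⬝ᵥ g t) l (𝓝 0) := by
  have h := tendsto_finsetSum Finset.univ fun i _ =>
    isBoundedUnder_le_mul_tendsto_zero
      (hf.mono_le (Eventually.of_forall fun t => norm_le_pi_norm (f t) i))
      (((continuous_apply i).tendsto' 0 0 rfl).comp hg)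
  rw [Finset.sum_const_zero] at h
  exact h

theorem integrableOn_dotProduct_const_of_norm_le {ι : Type*} [Fintype ι] {φ : ℝ → ι → ℝ}
    {s : Set ℝ} (hs : MeasurableSet s) (hvol : volume s < ⊤) (hφ : ContinuousOn φ s) {M : ℝ}
    (hM : ∀ t ∈ s, ‖φ t‖ ≤ M) (c : ι → ℝ) : IntegrableOn (fun t => φ t ⬝ᵥ c) s := by
  refine IntegrableOn.of_bound hvol
    ((continuous_id.dotProduct continuous_const).comp_continuousOn hφ |>.aestronglyMeasurable hs)
    (M * ∑ i, |c i|) ((ae_restrict_iff' hs).mpr (Eventually.of_forall fun t ht => ?_))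
  exact (abs_dotProduct_le_norm_mul_sum_abs _ _).trans
    (mul_le_mul_of_nonneg_right (hM t ht) (by positivity))

theorem update_add_sub_eq_indicator {β : Type*} [AddCommGroup β] {tg : ℕ → ℝ} (htg : Monotone tg)
    (u : ℕ → β) (k : ℕ) (ω : β) {j : ℕ} {t : ℝ} (ht : t ∈ Ioo (tg j) (tg (j + 1))) :
    Function.update u k (u k + ω) j - u j = (Ioo (tg k) (tg (k + 1))).indicator (fun _ => ω) t := by
  rcases eq_or_ne j k with rfl | hjk
  · simp [ht]
  · have hnot : t ∉ Ioo (tg k) (tg (k + 1)) :=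
      Set.disjoint_left.mp (htg.pairwise_disjoint_on_Ioo_succ hjk) ht
    simp [hjk, hnot]

section Perturbation

variable {d m : ℕ} {A : Matrix (Fin d) (Fin d) ℝ} {B : Matrix (Fin d) (Fin m) ℝ} {lam : ℝ}
  {x yd : Fin d → ℝ} {tg : ℕ → ℝ} {u : ℕ → Fin m → ℝ} {y yω φ : ℝ → Fin d → ℝ}

theorem IsTraj.exists_norm_le_of_adjoint (hy : IsTraj d m A B x tg y u)
    (hφ : ∀ t > 0, HasDerivAt φ (-(Aᵀ *ᵥ φ t) - Real.exp (-lam * t) • (y t - yd)) t) (T : ℝ) :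
    ∃ M, ∀ t ∈ Ioc 0 T, ‖φ t‖ ≤ M := by
  obtain ⟨C, hC⟩ := isCompact_Icc.exists_bound_of_continuousOn (s := Icc 0 T)
    ((Real.continuous_exp.comp (continuous_const.mul continuous_id)).continuousOn.smul
      ((hy.2.1.mono Icc_subset_Ici_self).sub continuousOn_const))
  exact exists_norm_le_of_hasDerivAt_adjoint A (fun t ht => hC t (Ioc_subset_Icc_self ht))
    fun t ht => hφ t ht.1

theorem IsTraj.integrableOn_Ioo_dotProduct_of_adjoint (hy : IsTraj d m A B x tg y u)
    (hφ : ∀ t > 0, HasDerivAt φ (-(Aᵀ *ᵥ φ t) - Real.exp (-lam * t) • (y t - yd)) t)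
    {a b : ℝ} (ha : 0 ≤ a) (c : Fin d → ℝ) : IntegrableOn (fun t => φ t ⬝ᵥ c) (Ioo a b) := by
  obtain ⟨M, hM⟩ := hy.exists_norm_le_of_adjoint hφ b
  exact integrableOn_dotProduct_const_of_norm_le measurableSet_Ioo measure_Ioo_lt_top
    (fun t ht => (hφ t (ha.trans_lt ht.1)).continuousAt.continuousWithinAt)
    (fun t ht => hM t ⟨ha.trans_lt ht.1, ht.2.le⟩) c

theorem integrableOn_exp_mul_dotProduct_sub {y₁ y₂ : ℝ → Fin d → ℝ}
    (hy₁ : ContinuousOn y₁ (Ici 0)) (hy₂ : ContinuousOn y₂ (Ici 0))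
    (h₁ : IntegrableOn (fun t => Real.exp (-lam * t) * ∑ i, (y₁ t i - yd i) ^ 2) (Ioi 0))
    (h₂ : IntegrableOn (fun t => Real.exp (-lam * t) * ∑ i, (y₂ t i - y₁ t i) ^ 2) (Ioi 0)) :
    IntegrableOn (fun t => Real.exp (-lam * t) * ((y₁ t - yd) ⬝ᵥ (y₂ t - y₁ t))) (Ioi 0) :=
  Integrable.mul_dotProduct_of_sum_sq (fun _ => (Real.exp_pos _).le) h₁ h₂
    (((Real.continuous_exp.comp (continuous_const.mul continuous_id)).continuousOn.mul
      ((continuous_fst.dotProduct continuous_snd).comp_continuousOn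
        ((hy₁.sub continuousOn_const).prodMk (hy₂.sub hy₁)))).mono
      Ioi_subset_Ici_self |>.aestronglyMeasurable measurableSet_Ioi)

theorem integral_exp_mul_dotProduct_eq_setIntegral_Ioo (htg0 : tg 0 = 0)
    (htg : Monotone tg) (htginf : Tendsto tg atTop atTop) {k : ℕ} {ω : Fin m → ℝ}
    (hy : IsTraj d m A B x tg y u) (hyω : IsTraj d m A B x tg yω (Function.update u k (u k + ω)))
    (hφ : ∀ t > 0, HasDerivAt φ (-(Aᵀ *ᵥ φ t) - Real.exp (-lam * t) • (y t - yd)) t)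
    (hcross : IntegrableOn (fun t => Real.exp (-lam * t) * ((y t - yd) ⬝ᵥ (yω t - y t))) (Ioi 0))
    (hlim : Tendsto (fun t => φ t ⬝ᵥ (yω t - y t)) atTop (𝓝 0)) :
    ∫ t in Ioi 0, Real.exp (-lam * t) * ((y t - yd) ⬝ᵥ (yω t - y t))
      = ∫ t in Ioo (tg k) (tg (k + 1)), φ t ⬝ᵥ B *ᵥ ω := by
  set cell := Ioo (tg k) (tg (k + 1))
  have hcell := hy.integrableOn_Ioo_dotProduct_of_adjoint hφ (htg0 ▸ htg k.zero_le)
    (b := tg (k + 1)) (B *ᵥ ω)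
  have hφbdd : IsBoundedUnder (· ≤ ·) (𝓝[>] 0) (norm ∘ φ) := by
    obtain ⟨M, hM⟩ := hy.exists_norm_le_of_adjoint hφ 1
    exact isBoundedUnder_of_eventually_le (mem_of_superset (Ioc_mem_nhdsGT one_pos) hM)
  have hzcont : ContinuousOn (fun t => yω t - y t) (Ici 0) := hyω.2.1.sub hy.2.1
  have hg : ContinuousOn (fun t => φ t ⬝ᵥ (yω t - y t)) (Ici 0) := by
    intro t ht
    rcases ht.out.eq_or_lt with rfl | ht
    · rw [← continuousWithinAt_Ioi_iff_Ici, ContinuousWithinAt, hy.1, hyω.1, sub_self,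
        dotProduct_zero]
      refine isBoundedUnder_dotProduct_tendsto_zero hφbdd ?_
      simpa [ContinuousWithinAt, hy.1, hyω.1] using
        (hzcont 0 self_mem_Ici).mono Ioi_subset_Ici_self
    · exact ((continuous_fst.dotProduct continuous_snd).continuousAt.comp_continuousWithinAt
        ((hφ t ht).continuousAt.continuousWithinAt.prodMk (hzcont t ht.le)))
  -- on each grid cell the derivative of `⟨φ, yω - y⟩` only sees the control jump on `I_k`
  have hderiv : ∀ t ∈ Ioi 0 \ range tg, HasDerivAt (fun t => φ t ⬝ᵥ (yω t - y t))
      (cell.indicator (fun t => φ t ⬝ᵥ B *ᵥ ω) t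
        - Real.exp (-lam * t) * ((y t - yd) ⬝ᵥ (yω t - y t))) t := by
    rintro t ⟨ht0, htg'⟩
    obtain ⟨j, hj⟩ := htg.exists_mem_Ioo_of_notMem_range (not_bddAbove_of_tendsto_atTop htginf)
      (htg0 ▸ ht0.out.le) htg'
    convert hasDerivAt_dotProduct_sub_of_adjoint A (hφ t ht0) (hy.2.2 j t hj) (hyω.2.2 j t hj)
      using 1
    rw [← mulVec_sub, update_add_sub_eq_indicator htg u k ω hj, smul_dotProduct, smul_eq_mul]
    by_cases htc : t ∈ cell <;> simp [cell, htc]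
  have hD := (hcell.integrable_indicator measurableSet_Ioo).integrableOn.sub hcross
  have hFTC := integral_Ioi_of_hasDerivAt_off_countable_of_tendsto (countable_range tg) hg hderiv
    hD hlim
  rw [integral_sub (hcell.integrable_indicator measurableSet_Ioo).integrableOn hcross,
    integral_indicator measurableSet_Ioo, Measure.restrict_restrict measurableSet_Ioo,
    inter_eq_self_of_subset_left (fun t ht => (htg0 ▸ htg (Nat.zero_le k)).trans_lt ht.1),
    hy.1, hyω.1, sub_self, dotProduct_zero, sub_zero] at hFTC
  linarith

end Perturbation

theorem local_perturbation_increases_cost_general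
    (d m : ℕ) (A : Matrix (Fin d) (Fin d) ℝ) (B : Matrix (Fin d) (Fin m) ℝ)
    (lam γ p q : ℝ) (hlam : 0 < lam)
    (hp0 : 0 < p) (hpq : p ≤ q)
    (yd x : Fin d → ℝ) (U : Set (Fin m → ℝ)) (hUc : IsCompact U)
    (tg : ℕ → ℝ) (htg0 : tg 0 = 0) (htgmono : StrictMono tg)
    (htginf : Filter.Tendsto tg Filter.atTop Filter.atTop)
    (useq : ℕ → Fin m → ℝ) (huseq : ∀ j, useq j ∈ U)
    (ytil : ℝ → Fin d → ℝ) (hytil : IsTraj d m A B x tg ytil useq)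
    (φtil : ℝ → Fin d → ℝ)
    (hφtil : ∀ t > (0 : ℝ), HasDerivAt φtil
      (-(A.transpose.mulVec (φtil t)) - Real.exp (-lam * t) • (ytil t - yd)) t)
    (k : ℕ)
    (hmin : ∀ u ∈ U,
      (∫ t in Set.Ioo (tg k) (tg (k + 1)), eInner (φtil t) (B.mulVec (useq k)))
          + γ * bcoef lam tg k * (∑ i, |useq k i| ^ p) ^ (q / p)
        ≤ (∫ t in Set.Ioo (tg k) (tg (k + 1)), eInner (φtil t) (B.mulVec u))
          + γ * bcoef lam tg k * (∑ i, |u i| ^ p) ^ (q / p))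
    (ω : Fin m → ℝ) (hω : useq k + ω ∈ U)
    (vseq : ℕ → Fin m → ℝ) (hvseq : vseq = Function.update useq k (useq k + ω))
    (yω : ℝ → Fin d → ℝ) (hyω : IsTraj d m A B x tg yω vseq)
    (hint1 : MeasureTheory.IntegrableOn
      (fun t => Real.exp (-lam * t) * ∑ i, (ytil t i - yd i) ^ 2) (Set.Ioi 0))
    (hint3 : MeasureTheory.IntegrableOn
      (fun t => Real.exp (-lam * t) * ∑ i, (yω t i - ytil t i) ^ 2) (Set.Ioi 0))
    (hlim : Filter.Tendsto (fun t => eInner (φtil t) (yω t - ytil t))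
      Filter.atTop (nhds 0)) :
    (∫ t in Set.Ioi (0 : ℝ), (1 / 2) * Real.exp (-lam * t) * ∑ i, (yω t i - ytil t i) ^ 2)
        ≤ Jcost d m lam γ p q yd tg yω vseq - Jcost d m lam γ p q yd tg ytil useq ∧
    0 ≤ ∫ t in Set.Ioi (0 : ℝ), (1 / 2) * Real.exp (-lam * t) * ∑ i, (yω t i - ytil t i) ^ 2 := by
  subst hvseq
  simp only [eInner_eq_dotProduct] at hmin hlim
  have hcell := hytil.integrableOn_Ioo_dotProduct_of_adjoint hφtil
    (htg0 ▸ htgmono.monotone k.zero_le) (b := tg (k + 1))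
  have hcross := integrableOn_exp_mul_dotProduct_sub hytil.2.1 hyω.2.1 hint1 hint3
  have hadj := integral_exp_mul_dotProduct_eq_setIntegral_Ioo htg0 htgmono.monotone htginf hytil
    hyω hφtil hcross hlim
  have hquad := integral_half_mul_sum_sq_sub_eq (w := fun t => Real.exp (-lam * t)) hint1 hint3
    hcross
  obtain ⟨P, hP⟩ := hUc.exists_rpow_sum_abs_rpow_le hp0.le (div_nonneg (hp0.le.trans hpq) hp0.le)
  have hpen := tsum_bcoef_mul_update_sub_tsum hlam htgmono.monotone
    (N := fun u : Fin m → ℝ => (∑ i, |u i| ^ p) ^ (q / p)) (fun _ => by positivity)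
    (fun j => hP _ (huseq j)) k (useq k + ω)
  have hsplit : ∫ t in Ioo (tg k) (tg (k + 1)), φtil t ⬝ᵥ B *ᵥ (useq k + ω)
      = (∫ t in Ioo (tg k) (tg (k + 1)), φtil t ⬝ᵥ B *ᵥ useq k)
        + ∫ t in Ioo (tg k) (tg (k + 1)), φtil t ⬝ᵥ B *ᵥ ω := by
    simp only [mulVec_add, dotProduct_add]
    exact integral_add (hcell _) (hcell _)
  have hmin' := hmin _ hω
  have hγpen := congrArg (γ * ·) hpen
  refine ⟨?_, setIntegral_nonneg measurableSet_Ioi fun t _ => by positivity⟩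
  simp only [Jcost]
  beta_reduce at hquad hγpen
  linarith

/-- Proposition 5.1: perturbing the control on a single grid interval
`I_k`, around a value minimizing the local Hamiltonian, does not decrease the cost:
`J^Δ(x,u^ω) - J^Δ(x,ũ) ≥ ∫₀^∞ ½ e^{-λt} ‖y^ω - ỹ‖² dt ≥ 0`. -/
theorem local_perturbation_increases_cost
    (d m : ℕ) (A : Matrix (Fin d) (Fin d) ℝ) (B : Matrix (Fin d) (Fin m) ℝ)
    (lam γ p q : ℝ) (hlam : 0 < lam) (hγ : 0 < γ)
    (hp0 : 0 < p) (hp1 : p < 1) (hpq : p ≤ q) (hq1 : q ≤ 1)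
    (yd x : Fin d → ℝ) (U : Set (Fin m → ℝ)) (hUc : IsCompact U) (hUconv : Convex ℝ U)
    (tg : ℕ → ℝ) (htg0 : tg 0 = 0) (htgmono : StrictMono tg)
    (htginf : Filter.Tendsto tg Filter.atTop Filter.atTop)
    (useq : ℕ → Fin m → ℝ) (huseq : ∀ j, useq j ∈ U)
    (ytil : ℝ → Fin d → ℝ) (hytil : IsTraj d m A B x tg ytil useq)
    (φtil : ℝ → Fin d → ℝ)
    (hφtil : ∀ t > (0 : ℝ), HasDerivAt φtil
      (-(A.transpose.mulVec (φtil t)) - Real.exp (-lam * t) • (ytil t - yd)) t)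
    (hφlim : Filter.Tendsto φtil Filter.atTop (nhds 0))
    (k : ℕ)
    (hmin : ∀ u ∈ U,
      (∫ t in Set.Ioo (tg k) (tg (k + 1)), eInner (φtil t) (B.mulVec (useq k)))
          + γ * bcoef lam tg k * (∑ i, |useq k i| ^ p) ^ (q / p)
        ≤ (∫ t in Set.Ioo (tg k) (tg (k + 1)), eInner (φtil t) (B.mulVec u))
          + γ * bcoef lam tg k * (∑ i, |u i| ^ p) ^ (q / p))
    (ω : Fin m → ℝ) (hω : useq k + ω ∈ U)
    (vseq : ℕ → Fin m → ℝ) (hvseq : vseq = Function.update useq k (useq k + ω))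
    (yω : ℝ → Fin d → ℝ) (hyω : IsTraj d m A B x tg yω vseq)
    (hint1 : MeasureTheory.IntegrableOn
      (fun t => Real.exp (-lam * t) * ∑ i, (ytil t i - yd i) ^ 2) (Set.Ioi 0))
    (hint2 : MeasureTheory.IntegrableOn
      (fun t => Real.exp (-lam * t) * ∑ i, (yω t i - yd i) ^ 2) (Set.Ioi 0))
    (hint3 : MeasureTheory.IntegrableOn
      (fun t => Real.exp (-lam * t) * ∑ i, (yω t i - ytil t i) ^ 2) (Set.Ioi 0))
    (hlim : Filter.Tendsto (fun t => eInner (φtil t) (yω t - ytil t))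
      Filter.atTop (nhds 0)) :
    (∫ t in Set.Ioi (0 : ℝ), (1 / 2) * Real.exp (-lam * t) * ∑ i, (yω t i - ytil t i) ^ 2)
        ≤ Jcost d m lam γ p q yd tg yω vseq - Jcost d m lam γ p q yd tg ytil useq ∧
    0 ≤ ∫ t in Set.Ioi (0 : ℝ), (1 / 2) * Real.exp (-lam * t) * ∑ i, (yω t i - ytil t i) ^ 2 :=
  local_perturbation_increases_cost_general d m A B lam γ p q hlam hp0 hpq yd x U hUc tg htg0
    htgmono htginf useq huseq ytil hytil φtil hφtil k hmin ω hω vseq hvseq yω hyω hint1 hint3 hlim
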